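/- arXiv:0902.0196 — 2 statements merged into one kernel-verified Lean document; each statement's English description precedes it below -/
import Mathlib

section
/- Let f ∈ L¹(G), let D_σ, D_δ, D_{α₁}, …, D_{α_k} be unitary representations of G, and let C be a unitary matrix such that D_σ(g) ⊗ D_δ(g) = C (D_{α₁}(g) ⊕ ⋯ ⊕ D_{α_k}(g)) C† for all g ∈ G. Then the bispectrum satisfies A_{3,f}(D_σ, D_δ) = (F_f(D_σ) ⊗ F_f(D_δ)) · C · (F_f(D_{α₁})† ⊕ ⋯ ⊕ F_f(D_{α_k})†) · C†. -/
open MeasureTheory Matrix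
open scoped Kronecker

/-- A (finite-dimensional, continuous) unitary representation of a topological group `G`
of dimension `n`: a continuous homomorphism into the `n × n` unitary matrices. -/
structure UnitaryRep (G : Type) [Group G] [TopologicalSpace G] (n : ℕ) : Type where
  toFun : G → Matrix (Fin n) (Fin n) ℂ
  continuous_toFun : Continuous toFun
  map_one' : toFun 1 = 1
  map_mul' : ∀ g h : G, toFun (g * h) = toFun g * toFun h
  unitary' : ∀ g : G, toFun g ∈ Matrix.unitaryGroup (Fin n) ℂ

namespace UnitaryRep

variable {G : Type} [Group G] [TopologicalSpace G]

/-- Irreducibility: the only invariant subspaces are `⊥` and `⊤`. -/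
def Irreducible {n : ℕ} (D : UnitaryRep G n) : Prop :=
  ∀ W : Submodule ℂ (Fin n → ℂ),
    (∀ g : G, ∀ v ∈ W, (D.toFun g).mulVec v ∈ W) → W = ⊥ ∨ W = ⊤

end UnitaryRep

/-- Equivalence of unitary representations via a fixed unitary intertwiner. -/
def RepEquiv {G : Type} [Group G] [TopologicalSpace G] {n m : ℕ}
    (D₁ : UnitaryRep G n) (D₂ : UnitaryRep G m) : Prop :=
  ∃ C : Matrix (Fin n) (Fin m) ℂ, C * Cᴴ = 1 ∧ Cᴴ * C = 1 ∧
    ∀ g : G, D₁.toFun g = C * D₂.toFun g * Cᴴ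

/-- The Fourier coefficient `F_f(D) = ∫_G f(g) D(g)† dg`. -/
noncomputable def repFourierCoeff {G : Type} [Group G] [TopologicalSpace G] [MeasurableSpace G]
    (μ : Measure G) (f : G → ℂ) {n : ℕ} (D : UnitaryRep G n) :
    Matrix (Fin n) (Fin n) ℂ :=
  Matrix.of fun i j => ∫ g, f g * (D.toFun g)ᴴ i j ∂μ

/-- The triple correlation `a_{3,f}(g₁,g₂) = ∫_G conj (f g) f (g g₁) f (g g₂) dg`. -/
noncomputable def tripleCorr {G : Type} [Group G] [TopologicalSpace G] [MeasurableSpace G]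
    (μ : Measure G) (f : G → ℂ) : G × G → ℂ :=
  fun p => ∫ g, (starRingEnd ℂ) (f g) * f (g * p.1) * f (g * p.2) ∂μ

/-- The bispectrum `A_{3,f}(D₁,D₂) = ∫∫ a_{3,f}(g₁,g₂) (D₁(g₁)† ⊗ D₂(g₂)†) dg₁ dg₂`. -/
noncomputable def bispectrum {G : Type} [Group G] [TopologicalSpace G] [MeasurableSpace G]
    (μ : Measure G) (f : G → ℂ) {n₁ n₂ : ℕ}
    (D₁ : UnitaryRep G n₁) (D₂ : UnitaryRep G n₂) :
    Matrix (Fin n₁ × Fin n₂) (Fin n₁ × Fin n₂) ℂ :=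
  Matrix.of fun p q =>
    ∫ g₁, ∫ g₂, tripleCorr μ f (g₁, g₂) * ((D₁.toFun g₁)ᴴ ⊗ₖ (D₂.toFun g₂)ᴴ) p q ∂μ ∂μ

/-- `P_D = ∫_H D(h) dh`, the projection associated to a closed subgroup `H` (with Haar
probability measure `ν`) and a unitary representation `D` of `G`. -/
noncomputable def subgroupProj {G : Type} [Group G] [TopologicalSpace G] [MeasurableSpace G]
    {H : Subgroup G} (ν : Measure ↥H) {n : ℕ} (D : UnitaryRep G n) :
    Matrix (Fin n) (Fin n) ℂ :=
  Matrix.of fun i j => ∫ h : ↥H, D.toFun (h : G) i j ∂ν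

/-!
Expanding the triple correlation and applying Fubini, the bispectrum becomes
`∫ conj (f g) (F_f(D_σ) D_σ(g)) ⊗ (F_f(D_δ) D_δ(g)) dg`, by the translation rule
`∫ f(g u) D(u)† du = F_f(D) D(g)`. The integrand is `(F_f(D_σ) ⊗ F_f(D_δ)) (D_σ(g) ⊗ D_δ(g))`;
inserting the decomposition of `D_σ ⊗ D_δ` and pulling the constant matrices out of the integral
leaves `∫ conj (f g) D_{α_i}(g) dg = F_f(D_{α_i})†` in each diagonal block.

Fubini needs `(x, y) ↦ f (x * y)` to be measurable for the product σ-algebra, which is not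
automatic since `G` need not be second countable. It holds once `f` is replaced, on a null set,
by a pointwise limit of continuous functions.
-/

open Filter Topology
open scoped BoundedContinuousFunction ComplexConjugate ENNReal

section WeightedMatrixIntegral

variable {α : Type*} [MeasurableSpace α] (μ : Measure α)

/-- `∫ φ(x) A(x) dμ(x)`, computed entrywise so that no norm on matrices has to be chosen. -/
noncomputable def weightedMatrixIntegral {m n : Type*} (φ : α → ℂ) (A : α → Matrix m n ℂ) :
    Matrix m n ℂ :=
  Matrix.of fun i j => ∫ x, φ x * A x i j ∂μ

variable {μ}

lemma MeasureTheory.Integrable.conj {φ : α → ℂ} (hφ : Integrable φ μ) :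
    Integrable (fun x => conj (φ x)) μ :=
  hφ.congr' (continuous_star.comp_aestronglyMeasurable hφ.1)
    (Eventually.of_forall fun _ => (RCLike.norm_conj _).symm)

lemma integrable_mul_of_continuous [TopologicalSpace α] [CompactSpace α] [OpensMeasurableSpace α]
    {φ k : α → ℂ} (hφ : Integrable φ μ) (hk : Continuous k) :
    Integrable (fun x => φ x * k x) μ := by
  obtain ⟨c, hc⟩ := isCompact_univ.exists_bound_of_continuousOn hk.continuousOn
  exact hφ.mul_bdd hk.aestronglyMeasurable (Eventually.of_forall fun x => hc x (Set.mem_univ x))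

lemma weightedMatrixIntegral_mul_mul [TopologicalSpace α] [CompactSpace α]
    [OpensMeasurableSpace α] {l m n o : Type*} [Fintype m] [Fintype n]
    {φ : α → ℂ} (hφ : Integrable φ μ) {A : α → Matrix m n ℂ} (hA : Continuous A)
    (X : Matrix l m ℂ) (Y : Matrix n o ℂ) :
    weightedMatrixIntegral μ φ (fun x => X * A x * Y) = X * weightedMatrixIntegral μ φ A * Y := by
  ext p q
  have hterm : ∀ r s, Integrable (fun x => X p r * (φ x * A x r s) * Y s q) μ := fun r s =>
    ((integrable_mul_of_continuous hφ (hA.matrix_elem r s)).const_mul _).mul_const _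
  calc ∫ x, φ x * (X * A x * Y) p q ∂μ
      = ∫ x, ∑ s, ∑ r, X p r * (φ x * A x r s) * Y s q ∂μ := by
        refine integral_congr_ae (Eventually.of_forall fun x => ?_)
        simp only [mul_apply, Finset.mul_sum, Finset.sum_mul]
        exact Finset.sum_congr rfl fun s _ => Finset.sum_congr rfl fun r _ => by ring
    _ = ∑ s, ∑ r, X p r * (∫ x, φ x * A x r s ∂μ) * Y s q := by
        rw [integral_finsetSum _ fun s _ => integrable_finsetSum _ fun r _ => hterm r s]
        refine Finset.sum_congr rfl fun s _ => ?_
        rw [integral_finsetSum _ fun r _ => hterm r s]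
        simp only [integral_mul_const, integral_const_mul]
    _ = (X * weightedMatrixIntegral μ φ A * Y) p q := by
        simp only [mul_apply, Finset.sum_mul, weightedMatrixIntegral, of_apply]

lemma weightedMatrixIntegral_blockDiagonal' {k : Type*} [DecidableEq k] {m n : k → Type*}
    (φ : α → ℂ) (A : ∀ i, α → Matrix (m i) (n i) ℂ) :
    weightedMatrixIntegral μ φ (fun x => blockDiagonal' fun i => A i x) =
      blockDiagonal' fun i => weightedMatrixIntegral μ φ (A i) := by
  ext ⟨i, a⟩ ⟨j, b⟩
  by_cases h : i = j
  · subst h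
    simp [weightedMatrixIntegral, blockDiagonal'_apply_eq]
  · simp [weightedMatrixIntegral, blockDiagonal'_apply_ne _ _ _ h]

end WeightedMatrixIntegral

namespace UnitaryRep

variable {G : Type} [Group G] [TopologicalSpace G] {n : ℕ} (D : UnitaryRep G n)

lemma conjTranspose_mul_self (g : G) : (D.toFun g)ᴴ * D.toFun g = 1 :=
  (D.unitary' g).1

lemma conjTranspose_map_mul_mul (g h : G) :
    (D.toFun (g * h))ᴴ * D.toFun g = (D.toFun h)ᴴ := by
  rw [D.map_mul', conjTranspose_mul, Matrix.mul_assoc, D.conjTranspose_mul_self, Matrix.mul_one]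

end UnitaryRep

section FourierCoeff

variable {G : Type} [Group G] [TopologicalSpace G] [MeasurableSpace G] {μ : Measure G}
  {f : G → ℂ} {n : ℕ}

lemma repFourierCoeff_eq_weightedMatrixIntegral (D : UnitaryRep G n) :
    repFourierCoeff μ f D = weightedMatrixIntegral μ f fun g => (D.toFun g)ᴴ :=
  rfl

lemma repFourierCoeff_congr_ae {f' : G → ℂ} (h : f =ᵐ[μ] f') (D : UnitaryRep G n) :
    repFourierCoeff μ f D = repFourierCoeff μ f' D := by
  ext i j
  exact integral_congr_ae (h.mono fun g hg => by simp only [hg])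

lemma conjTranspose_repFourierCoeff (D : UnitaryRep G n) :
    (repFourierCoeff μ f D)ᴴ = weightedMatrixIntegral μ (fun g => conj (f g)) D.toFun := by
  ext i j
  simp only [conjTranspose_apply, repFourierCoeff, weightedMatrixIntegral, of_apply]
  rw [← starRingEnd_apply, ← integral_conj]
  simp

variable [MeasurableMul G] [CompactSpace G] [OpensMeasurableSpace G] [μ.IsMulLeftInvariant]

lemma weightedMatrixIntegral_translate (hf : Integrable f μ) (D : UnitaryRep G n) (g : G) :
    weightedMatrixIntegral μ (fun u => f (g * u)) (fun u => (D.toFun u)ᴴ) =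
      repFourierCoeff μ f D * D.toFun g := by
  have hleft : weightedMatrixIntegral μ (fun u => f (g * u)) (fun u => (D.toFun u)ᴴ) =
      weightedMatrixIntegral μ f (fun v => 1 * (D.toFun v)ᴴ * D.toFun g) := by
    ext i j
    simp only [weightedMatrixIntegral, of_apply, Matrix.one_mul]
    calc ∫ u, f (g * u) * (D.toFun u)ᴴ i j ∂μ
        = ∫ u, f (g * u) * ((D.toFun (g * u))ᴴ * D.toFun g) i j ∂μ := by
          simp only [D.conjTranspose_map_mul_mul]
      _ = _ := integral_mul_left_eq_self (fun v => f v * ((D.toFun v)ᴴ * D.toFun g) i j) g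
  rw [hleft, weightedMatrixIntegral_mul_mul hf D.continuous_toFun.matrix_conjTranspose,
    Matrix.one_mul, repFourierCoeff_eq_weightedMatrixIntegral]

end FourierCoeff

section Bispectrum

variable {G : Type} [Group G] [MeasurableSpace G] [MeasurableMul G] {μ : Measure G} {f : G → ℂ}

lemma integrable_tripleCorr_integrand [μ.IsMulLeftInvariant] [SFinite μ] (hf : Integrable f μ)
    (hfm : StronglyMeasurable fun z : G × G => f (z.1 * z.2)) :
    Integrable (fun p : G × G × G => conj (f p.1) * f (p.1 * p.2.1) * f (p.1 * p.2.2))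
      (μ.prod (μ.prod μ)) := by
  have hfm₁ : StronglyMeasurable f := by
    have h1 : Measurable fun x : G => (x, (1 : G)) := measurable_id.prodMk measurable_const
    simpa [Function.comp_def] using hfm.comp_measurable h1
  have hmeas : AEStronglyMeasurable
      (fun p : G × G × G => conj (f p.1) * f (p.1 * p.2.1) * f (p.1 * p.2.2))
      (μ.prod (μ.prod μ)) :=
    (((continuous_star.comp_stronglyMeasurable (hfm₁.comp_measurable measurable_fst)).mul
      (hfm.comp_measurable (measurable_fst.prodMk (measurable_fst.comp measurable_snd)))).mul
      (hfm.comp_measurable (measurable_fst.prodMk (measurable_snd.comp measurable_snd)))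
      ).aestronglyMeasurable
  refine (integrable_prod_iff hmeas).2 ⟨Eventually.of_forall fun g => ?_, ?_⟩
  · simpa only [mul_assoc] using
      ((hf.comp_mul_left g).mul_prod (hf.comp_mul_left g)).const_mul (conj (f g))
  · refine (hf.norm.mul_const ((∫ x, ‖f x‖ ∂μ) * ∫ x, ‖f x‖ ∂μ)).congr
      (Eventually.of_forall fun g => ?_)
    simp only [norm_mul, RCLike.norm_conj, mul_assoc]
    rw [integral_const_mul, integral_prod_mul (fun x => ‖f (g * x)‖) (fun x => ‖f (g * x)‖),
      integral_mul_left_eq_self (fun x => ‖f x‖) g]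

variable [TopologicalSpace G]

lemma tripleCorr_congr_ae [μ.IsMulRightInvariant] {f' : G → ℂ} (h : f =ᵐ[μ] f') :
    tripleCorr μ f = tripleCorr μ f' := by
  funext p
  have h₁ := (measurePreserving_mul_right μ p.1).quasiMeasurePreserving.ae_eq h
  have h₂ := (measurePreserving_mul_right μ p.2).quasiMeasurePreserving.ae_eq h
  refine integral_congr_ae ?_
  filter_upwards [h, h₁, h₂] with g hg hg₁ hg₂
  simp only [Function.comp_apply] at hg₁ hg₂
  rw [hg, hg₁, hg₂]

lemma bispectrum_congr_ae [μ.IsMulRightInvariant] {f' : G → ℂ} (h : f =ᵐ[μ] f') {n₁ n₂ : ℕ}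
    (D₁ : UnitaryRep G n₁) (D₂ : UnitaryRep G n₂) :
    bispectrum μ f D₁ D₂ = bispectrum μ f' D₁ D₂ := by
  simp only [bispectrum, tripleCorr_congr_ae h]

variable [μ.IsMulLeftInvariant] [SFinite μ] [CompactSpace G] [OpensMeasurableSpace G]

lemma integral_integral_tripleCorr_mul (hf : Integrable f μ)
    (hfm : StronglyMeasurable fun z : G × G => f (z.1 * z.2)) {k₁ k₂ : G → ℂ}
    (hk₁ : Continuous k₁) (hk₂ : Continuous k₂) :
    ∫ g₁, ∫ g₂, tripleCorr μ f (g₁, g₂) * (k₁ g₁ * k₂ g₂) ∂μ ∂μ =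
      ∫ g, conj (f g) * ((∫ u, f (g * u) * k₁ u ∂μ) * ∫ v, f (g * v) * k₂ v ∂μ) ∂μ := by
  obtain ⟨c₁, hc₁⟩ := isCompact_univ.exists_bound_of_continuousOn hk₁.continuousOn
  obtain ⟨c₂, hc₂⟩ := isCompact_univ.exists_bound_of_continuousOn hk₂.continuousOn
  have hK : StronglyMeasurable fun p : G × G × G => k₁ p.2.1 * k₂ p.2.2 :=
    (hk₁.stronglyMeasurable.comp_measurable (measurable_fst.comp measurable_snd)).mul
      (hk₂.stronglyMeasurable.comp_measurable (measurable_snd.comp measurable_snd))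
  have hV : Integrable (fun p : G × G × G =>
      conj (f p.1) * f (p.1 * p.2.1) * f (p.1 * p.2.2) * (k₁ p.2.1 * k₂ p.2.2))
      (μ.prod (μ.prod μ)) :=
    (integrable_tripleCorr_integrand hf hfm).mul_bdd hK.aestronglyMeasurable
      (Eventually.of_forall fun p => by
        rw [norm_mul]
        exact mul_le_mul (hc₁ _ trivial) (hc₂ _ trivial) (norm_nonneg _)
          ((norm_nonneg (k₁ p.2.1)).trans (hc₁ _ trivial)))
  calc ∫ g₁, ∫ g₂, tripleCorr μ f (g₁, g₂) * (k₁ g₁ * k₂ g₂) ∂μ ∂μ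
      = ∫ z : G × G, ∫ g, conj (f g) * f (g * z.1) * f (g * z.2) * (k₁ z.1 * k₂ z.2) ∂μ
          ∂(μ.prod μ) := by
        rw [integral_prod _ hV.integral_prod_right]
        simp only [tripleCorr, integral_mul_const]
    _ = ∫ g, ∫ z : G × G, conj (f g) * f (g * z.1) * f (g * z.2) * (k₁ z.1 * k₂ z.2)
          ∂(μ.prod μ) ∂μ :=
        (integral_integral_swap hV).symm
    _ = _ := by
        refine integral_congr_ae (Eventually.of_forall fun g => ?_)
        dsimp only
        rw [← integral_prod_mul, ← integral_const_mul]
        refine integral_congr_ae (Eventually.of_forall fun z => ?_)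
        ring

lemma bispectrum_eq_weightedMatrixIntegral (hf : Integrable f μ)
    (hfm : StronglyMeasurable fun z : G × G => f (z.1 * z.2)) {n₁ n₂ : ℕ}
    (D₁ : UnitaryRep G n₁) (D₂ : UnitaryRep G n₂) :
    bispectrum μ f D₁ D₂ = weightedMatrixIntegral μ (fun g => conj (f g)) fun g =>
      (repFourierCoeff μ f D₁ * D₁.toFun g) ⊗ₖ (repFourierCoeff μ f D₂ * D₂.toFun g) := by
  ext p q
  simp only [← weightedMatrixIntegral_translate hf]
  exact integral_integral_tripleCorr_mul hf hfm
    (D₁.continuous_toFun.matrix_conjTranspose.matrix_elem p.1 q.1)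
    (D₂.continuous_toFun.matrix_conjTranspose.matrix_elem p.2 q.2)

end Bispectrum

lemma MeasureTheory.Integrable.exists_seq_boundedContinuous_tendsto_ae {α E : Type*}
    [TopologicalSpace α] [NormalSpace α] [MeasurableSpace α] [BorelSpace α] {μ : Measure α}
    [μ.WeaklyRegular]
    [NormedAddCommGroup E] [NormedSpace ℝ E] {f : α → E} (hf : Integrable f μ) :
    ∃ ψ : ℕ → α →ᵇ E, ∀ᵐ x ∂μ, Tendsto (fun n => ψ n x) atTop (𝓝 (f x)) := by
  have hψ : ∀ n : ℕ, ∃ ψ : α →ᵇ E, eLpNorm (⇑ψ - f) 1 μ ≤ (n : ℝ≥0∞)⁻¹ ∧ MemLp ψ 1 μ := by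
    intro n
    obtain ⟨ψ, hψ, hψ_mem⟩ :=
      (memLp_one_iff_integrable.2 hf).exists_boundedContinuous_eLpNorm_sub_le ENNReal.one_ne_top
        (ENNReal.inv_ne_zero.2 (ENNReal.natCast_ne_top n))
    exact ⟨ψ, by rwa [eLpNorm_sub_comm], hψ_mem⟩
  choose ψ hψ hψ_mem using hψ
  have hconv : TendstoInMeasure μ (fun n => ⇑(ψ n)) atTop f :=
    tendstoInMeasure_of_tendsto_eLpNorm one_ne_zero (fun n => (hψ_mem n).1) hf.1
      (tendsto_of_tendsto_of_tendsto_of_le_of_le tendsto_const_nhds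
        ENNReal.tendsto_inv_nat_nhds_zero (fun _ => zero_le) hψ)
  obtain ⟨ns, -, hns⟩ := hconv.exists_seq_tendsto_ae
  exact ⟨fun n => ψ (ns n), hns⟩

lemma MeasureTheory.Integrable.exists_ae_eq_stronglyMeasurable_comp_mul {G E : Type*} [Mul G]
    [TopologicalSpace G] [ContinuousMul G] [CompactSpace G] [NormalSpace G] [MeasurableSpace G]
    [BorelSpace G] {μ : Measure G} [μ.WeaklyRegular] [NormedAddCommGroup E] [NormedSpace ℝ E]
    [CompleteSpace E] {f : G → E} (hf : Integrable f μ) :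
    ∃ f' : G → E, f =ᵐ[μ] f' ∧ StronglyMeasurable fun z : G × G => f' (z.1 * z.2) := by
  obtain ⟨ψ, hψ⟩ := hf.exists_seq_boundedContinuous_tendsto_ae
  refine ⟨fun x => limUnder atTop fun n => ψ n x, hψ.mono fun x hx => hx.limUnder_eq.symm, ?_⟩
  exact StronglyMeasurable.limUnder fun n => HasCompactSupport.stronglyMeasurable_of_prod
    ((ψ n).continuous.comp continuous_mul) (isClosed_tsupport _).isCompact

lemma isMulRightInvariant_of_isHaarMeasure_of_isProbabilityMeasure {G : Type*} [Group G]
    [TopologicalSpace G] [IsTopologicalGroup G] [CompactSpace G] [MeasurableSpace G]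
    [BorelSpace G] (μ : Measure G) [μ.IsHaarMeasure] [IsProbabilityMeasure μ] :
    μ.IsMulRightInvariant where
  map_mul_right_eq_self g :=
    haveI := Measure.isProbabilityMeasure_map (μ := μ) (measurable_mul_const g).aemeasurable
    Measure.isHaarMeasure_eq_of_isProbabilityMeasure _ μ

theorem bispectrum_eq_of_tensor_decomp_general {G : Type} [Group G] [TopologicalSpace G]
    [IsTopologicalGroup G] [CompactSpace G] [MeasurableSpace G] [BorelSpace G]
    (μ : Measure G) [μ.IsHaarMeasure] [IsProbabilityMeasure μ]
    (f : G → ℂ) (hf : Integrable f μ)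
    {nσ nδ : ℕ} (Dσ : UnitaryRep G nσ) (Dδ : UnitaryRep G nδ)
    {k : ℕ} {m : Fin k → ℕ} (Dα : ∀ i : Fin k, UnitaryRep G (m i))
    (C : Matrix (Fin nσ × Fin nδ) (Σ i : Fin k, Fin (m i)) ℂ)
    (hdec : ∀ g : G, Dσ.toFun g ⊗ₖ Dδ.toFun g =
      C * Matrix.blockDiagonal' (fun i => (Dα i).toFun g) * Cᴴ) :
    bispectrum μ f Dσ Dδ =
      (repFourierCoeff μ f Dσ ⊗ₖ repFourierCoeff μ f Dδ) * C *
        Matrix.blockDiagonal' (fun i => (repFourierCoeff μ f (Dα i))ᴴ) * Cᴴ := by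
  have := isMulRightInvariant_of_isHaarMeasure_of_isProbabilityMeasure μ
  obtain ⟨f', hff', hf'm⟩ := hf.exists_ae_eq_stronglyMeasurable_comp_mul
  have hf' : Integrable f' μ := hf.congr hff'
  simp only [bispectrum_congr_ae hff', repFourierCoeff_congr_ae hff']
  rw [bispectrum_eq_weightedMatrixIntegral hf' hf'm]
  simp only [mul_kronecker_mul, hdec, ← Matrix.mul_assoc]
  rw [weightedMatrixIntegral_mul_mul hf'.conj
      (continuous_pi fun i => (Dα i).continuous_toFun).matrix_blockDiagonal',
    weightedMatrixIntegral_blockDiagonal']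
  simp only [conjTranspose_repFourierCoeff]

/-- **Lemma 3.2.3**: the bispectrum of an integrable function on a compact group factors
through the Fourier coefficients, via the Clebsch–Gordan decomposition of the tensor product. -/
theorem bispectrum_eq_of_tensor_decomp {G : Type} [Group G] [TopologicalSpace G]
    [IsTopologicalGroup G] [CompactSpace G] [T2Space G] [MeasurableSpace G] [BorelSpace G]
    (μ : Measure G) [μ.IsHaarMeasure] [IsProbabilityMeasure μ]
    (f : G → ℂ) (hf : Integrable f μ)
    {nσ nδ : ℕ} (Dσ : UnitaryRep G nσ) (Dδ : UnitaryRep G nδ)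
    {k : ℕ} {m : Fin k → ℕ} (Dα : ∀ i : Fin k, UnitaryRep G (m i))
    (C : Matrix (Fin nσ × Fin nδ) (Σ i : Fin k, Fin (m i)) ℂ)
    (hC1 : C * Cᴴ = 1) (hC2 : Cᴴ * C = 1)
    (hdec : ∀ g : G, Dσ.toFun g ⊗ₖ Dδ.toFun g =
      C * Matrix.blockDiagonal' (fun i => (Dα i).toFun g) * Cᴴ) :
    bispectrum μ f Dσ Dδ =
      (repFourierCoeff μ f Dσ ⊗ₖ repFourierCoeff μ f Dδ) * C *
        Matrix.blockDiagonal' (fun i => (repFourierCoeff μ f (Dα i))ᴴ) * Cᴴ :=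
  bispectrum_eq_of_tensor_decomp_general μ f hf Dσ Dδ Dα C hdec
end

section
/- Let f ∈ L¹(SU(2)) be real-valued and let F(1) = ∫_{SU(2)} f(g) g† dg be the Fourier coefficient of f at the self-representation g ↦ g of SU(2). Then det F(1) is a real number and det F(1) ≥ 0. -/
open MeasureTheory Matrix
open scoped Kronecker

/-- The special unitary group `SU(2)`, as a subgroup of the `2 × 2` unitary group. -/
def SU2 : Subgroup ↥(Matrix.unitaryGroup (Fin 2) ℂ) where
  carrier := {A | ((A : Matrix (Fin 2) (Fin 2) ℂ)).det = 1}
  one_mem' := by simp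
  mul_mem' := by
    intro a b ha hb
    simp only [Set.mem_setOf_eq] at *
    simp [Matrix.UnitaryGroup.mul_val, Matrix.det_mul, ha, hb]
  inv_mem' := by
    intro a ha
    simp only [Set.mem_setOf_eq] at *
    simp [Matrix.UnitaryGroup.inv_val, Matrix.star_eq_conjTranspose,
      Matrix.det_conjTranspose, ha]

/-!
Writing `g = [[a, -b̄], [b, ā]]`, the elements of `SU(2)` are exactly the unitary matrices with
`gᴴ = adj g`. For `2 × 2` matrices `A ↦ adj A` is complex linear, so the condition `Aᴴ = adj A`
is preserved by real-weighted integrals, and the Fourier coefficient `F = ∫ f(g) gᴴ dg` satisfies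
it as well. But then `F Fᴴ = F adj F = det F • 1`, so `det F` is a diagonal entry of the
positive semidefinite matrix `F Fᴴ`.
-/

open scoped ComplexOrder

namespace Matrix

section Adjugate

variable {n : Type*} [Fintype n] [DecidableEq n]

theorem conjTranspose_eq_adjugate_of_mem_unitaryGroup {A : Matrix n n ℂ}
    (hA : A ∈ unitaryGroup n ℂ) (hdet : A.det = 1) : Aᴴ = A.adjugate := by
  rw [← star_eq_conjTranspose, ← inv_eq_left_inv (mem_unitaryGroup_iff'.mp hA), inv_def, hdet]
  simp

theorem conjTranspose_conjTranspose_eq_adjugate {A : Matrix n n ℂ} (hA : Aᴴ = A.adjugate) :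
    Aᴴᴴ = Aᴴ.adjugate := by
  rw [← adjugate_conjTranspose, ← hA]

theorem det_nonneg_of_conjTranspose_eq_adjugate [Nonempty n] {A : Matrix n n ℂ}
    (hA : Aᴴ = A.adjugate) : 0 ≤ A.det := by
  obtain ⟨i⟩ := ‹Nonempty n›
  have hdiag : (A * Aᴴ) i i = A.det := by
    rw [hA, mul_adjugate, smul_apply, one_apply_eq, smul_eq_mul, mul_one]
  rw [← hdiag, mul_apply]
  exact Finset.sum_nonneg fun j _ => mul_star_self_nonneg (A i j)

end Adjugate

section Integral

variable {X : Type*} [MeasurableSpace X] (μ : Measure X)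

theorem conjTranspose_of_integral {n : Type*} (φ : X → ℂ) (N : X → Matrix n n ℂ) :
    (of fun i j => ∫ x, φ x * N x i j ∂μ)ᴴ
      = of fun i j => ∫ x, starRingEnd ℂ (φ x) * (N x)ᴴ i j ∂μ := by
  ext i j
  simp [← integral_conj]

theorem adjugate_of_integral_fin_two (φ : X → ℂ) (N : X → Matrix (Fin 2) (Fin 2) ℂ) :
    (of fun i j => ∫ x, φ x * N x i j ∂μ).adjugate
      = of fun i j => ∫ x, φ x * (N x).adjugate i j ∂μ := by
  ext i j
  fin_cases i <;> fin_cases j <;> simp [adjugate_fin_two, integral_neg]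

theorem conjTranspose_eq_adjugate_of_integral_fin_two {φ : X → ℂ}
    (hφ : ∀ x, (φ x).im = 0) {N : X → Matrix (Fin 2) (Fin 2) ℂ}
    (hN : ∀ x, (N x)ᴴ = (N x).adjugate) :
    (of fun i j => ∫ x, φ x * N x i j ∂μ)ᴴ = (of fun i j => ∫ x, φ x * N x i j ∂μ).adjugate := by
  simp only [conjTranspose_of_integral, adjugate_of_integral_fin_two, hN,
    Complex.conj_eq_iff_im.mpr (hφ _)]

end Integral

end Matrix

theorem su2_det_selfRep_fourierCoeff_nonneg_general
    [MeasurableSpace ↥SU2]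
    (μ : Measure ↥SU2)
    (f : ↥SU2 → ℂ) (hfreal : ∀ g, (f g).im = 0) :
    ((Matrix.of fun i j =>
        ∫ g : ↥SU2, f g *
          (((g : ↥(Matrix.unitaryGroup (Fin 2) ℂ)) : Matrix (Fin 2) (Fin 2) ℂ))ᴴ i j ∂μ :
      Matrix (Fin 2) (Fin 2) ℂ)).det.im = 0 ∧
    0 ≤ ((Matrix.of fun i j =>
        ∫ g : ↥SU2, f g *
          (((g : ↥(Matrix.unitaryGroup (Fin 2) ℂ)) : Matrix (Fin 2) (Fin 2) ℂ))ᴴ i j ∂μ :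
      Matrix (Fin 2) (Fin 2) ℂ)).det.re := by
  have hadj : ∀ g : ↥SU2,
      ((g : Matrix (Fin 2) (Fin 2) ℂ))ᴴᴴ = ((g : Matrix (Fin 2) (Fin 2) ℂ))ᴴ.adjugate :=
    fun g => conjTranspose_conjTranspose_eq_adjugate
      (conjTranspose_eq_adjugate_of_mem_unitaryGroup (g : unitaryGroup (Fin 2) ℂ).2 g.2)
  have hdet := det_nonneg_of_conjTranspose_eq_adjugate
    (conjTranspose_eq_adjugate_of_integral_fin_two μ hfreal hadj)
  obtain ⟨hre, him⟩ := Complex.nonneg_iff.mp hdet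
  exact ⟨him.symm, hre⟩

/-- For a real-valued `f ∈ L¹(SU(2))`, the determinant of the Fourier coefficient of `f` at
the self-representation `g ↦ g` is a nonnegative real number. -/
theorem su2_det_selfRep_fourierCoeff_nonneg
    [IsTopologicalGroup ↥SU2] [CompactSpace ↥SU2] [T2Space ↥SU2]
    [MeasurableSpace ↥SU2] [BorelSpace ↥SU2]
    (μ : Measure ↥SU2) [μ.IsHaarMeasure] [IsProbabilityMeasure μ]
    (f : ↥SU2 → ℂ) (hf : Integrable f μ) (hfreal : ∀ g, (f g).im = 0) :
    ((Matrix.of fun i j =>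
        ∫ g : ↥SU2, f g *
          (((g : ↥(Matrix.unitaryGroup (Fin 2) ℂ)) : Matrix (Fin 2) (Fin 2) ℂ))ᴴ i j ∂μ :
      Matrix (Fin 2) (Fin 2) ℂ)).det.im = 0 ∧
    0 ≤ ((Matrix.of fun i j =>
        ∫ g : ↥SU2, f g *
          (((g : ↥(Matrix.unitaryGroup (Fin 2) ℂ)) : Matrix (Fin 2) (Fin 2) ℂ))ᴴ i j ∂μ :
      Matrix (Fin 2) (Fin 2) ℂ)).det.re :=
  su2_det_selfRep_fourierCoeff_nonneg_general μ f hfreal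
end
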